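/- If A, B, C are iid random variables with values in ℝ and there exists a real number a with P(A = a) > 0, then P(2A < B + C) < 2/3 strictly. -/

import Mathlib

/-!
At most `n - 1` coordinates of a point of `ℝⁿ` lie strictly below the mean of its coordinates,
and none does when the point is constant. The coordinates of an iid vector are exchangeable, so
these `n` events are equally likely and `n · P(n X₀ < ∑ Xⱼ) ≤ (n - 1) · P(X not constant)`;
an atom of the law gives the constant vectors positive mass, making the bound strict. For
`n = 3` the event `3 X₀ < X₀ + X₁ + X₂` is `2A < B + C`.
-/

open MeasureTheory ENNReal Finset

section
variable {ι α : Type*} [Fintype ι] [MeasurableSpace α]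

theorem measurePreserving_comp_perm (μ : Measure α) [SigmaFinite μ] (σ : Equiv.Perm ι) :
    MeasurePreserving (fun x : ι → α => x ∘ σ) (Measure.pi fun _ => μ)
      (Measure.pi fun _ => μ) := by
  convert measurePreserving_piCongrLeft (fun _ : ι => μ) σ.symm using 1
  ext x i
  simp [MeasurableEquiv.piCongrLeft, Equiv.piCongrLeft_apply_eq_cast]

theorem measure_pi_diagonal_pos (μ : Measure α) [SigmaFinite μ] {a : α} (ha : 0 < μ {a}) :
    0 < Measure.pi (fun _ : ι => μ) {x | ∀ i j, x i = x j} := by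
  calc 0 < μ {a} ^ Fintype.card ι := ENNReal.pow_pos ha _
    _ = Measure.pi (fun _ : ι => μ) {Function.const ι a} := by simp
    _ ≤ _ := measure_mono <| by simp

end

open scoped Classical in
theorem sum_measure_le_mul_of_card_le {ι α : Type*} [MeasurableSpace α] (μ : Measure α)
    {s : Finset ι} {E : ι → Set α} {F : Set α} (hE : ∀ i ∈ s, MeasurableSet (E i))
    (hF : MeasurableSet F) (hEF : ∀ i ∈ s, E i ⊆ F) {k : ℕ}
    (hk : ∀ x ∈ F, #{i ∈ s | x ∈ E i} ≤ k) :
    ∑ i ∈ s, μ (E i) ≤ k * μ F := by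
  have hpt : ∀ x, ∑ i ∈ s, (E i).indicator 1 x ≤ F.indicator (fun _ => (k : ℝ≥0∞)) x := by
    intro x
    by_cases hx : x ∈ F
    · simp only [Set.indicator_apply, Pi.one_apply, sum_boole, hx, if_true]
      exact_mod_cast hk x hx
    · rw [Set.indicator_of_notMem hx]
      exact (sum_eq_zero fun i hi => Set.indicator_of_notMem (fun h => hx (hEF i hi h)) _).le
  calc ∑ i ∈ s, μ (E i) = ∫⁻ x, ∑ i ∈ s, (E i).indicator 1 x ∂μ := by
        rw [lintegral_finsetSum _ fun i hi => measurable_one.indicator (hE i hi)]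
        exact sum_congr rfl fun i hi => (lintegral_indicator_one (hE i hi)).symm
    _ ≤ ∫⁻ x, F.indicator (fun _ => (k : ℝ≥0∞)) x ∂μ := lintegral_mono hpt
    _ = k * μ F := lintegral_indicator_const hF _

section
variable {ι : Type*} [Fintype ι]

theorem exists_sum_le_card_mul [Nonempty ι] (x : ι → ℝ) :
    ∃ i, ∑ j, x j ≤ Fintype.card ι * x i := by
  obtain ⟨i, -, hi⟩ := exists_le_of_sum_le (s := univ) (f := fun _ => ∑ j, x j)
    (g := fun i => Fintype.card ι * x i) univ_nonempty (by simp [mul_sum])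
  exact ⟨i, hi⟩

theorem card_mul_measure_pi_lt_mean_le [Nonempty ι] [DecidableEq ι] (μ : Measure ℝ)
    [SigmaFinite μ] (i₀ : ι) :
    Fintype.card ι * Measure.pi (fun _ => μ) {x | Fintype.card ι * x i₀ < ∑ j, x j}
      ≤ (Fintype.card ι - 1 : ℕ) * Measure.pi (fun _ => μ) {x : ι → ℝ | ∀ i j, x i = x j}ᶜ := by
  set E : ι → Set (ι → ℝ) := fun i => {x | (Fintype.card ι : ℝ) * x i < ∑ j, x j}
  have hE : ∀ i, MeasurableSet (E i) := fun i => measurableSet_lt (by fun_prop) (by fun_prop)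
  have hperm : ∀ i, Measure.pi (fun _ => μ) (E i) = Measure.pi (fun _ => μ) (E i₀) := by
    intro i
    have : E i = (· ∘ Equiv.swap i i₀) ⁻¹' E i₀ := by
      ext x
      simp [E, Equiv.sum_comp (Equiv.swap i i₀) x]
    rw [this, (measurePreserving_comp_perm μ (Equiv.swap i i₀)).measure_preimage
      (hE i₀).nullMeasurableSet]
  have hD : MeasurableSet {x : ι → ℝ | ∀ i j, x i = x j} := by measurability
  calc _ = ∑ i, Measure.pi (fun _ => μ) (E i) := by
        rw [sum_congr rfl fun i _ => hperm i, sum_const, card_univ, nsmul_eq_mul]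
    _ ≤ _ := by
      refine sum_measure_le_mul_of_card_le _ (fun i _ => hE i) hD.compl ?_ ?_
      · intro i _ x hx hxD
        have : ∑ j, x j = Fintype.card ι * x i := by simp [hxD _ i]
        exact hx.ne' this
      · intro x _
        obtain ⟨i, hi⟩ := exists_sum_le_card_mul x
        have : #{i | x ∈ E i} < Fintype.card ι :=
          card_lt_univ_of_notMem (x := i) (by simpa [E] using hi)
        omega

theorem card_mul_measure_pi_lt_mean_lt [Nontrivial ι] [DecidableEq ι] (μ : Measure ℝ)
    [IsProbabilityMeasure μ] {a : ℝ} (ha : 0 < μ {a}) (i₀ : ι) :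
    Fintype.card ι * Measure.pi (fun _ => μ) {x | Fintype.card ι * x i₀ < ∑ j, x j}
      < (Fintype.card ι - 1 : ℕ) := by
  have hD : MeasurableSet {x : ι → ℝ | ∀ i j, x i = x j} := by measurability
  have hn : (Fintype.card ι - 1 : ℕ) ≠ 0 := by have := Fintype.one_lt_card (α := ι); omega
  calc _ ≤ (Fintype.card ι - 1 : ℕ) * Measure.pi (fun _ => μ) {x : ι → ℝ | ∀ i j, x i = x j}ᶜ :=
        card_mul_measure_pi_lt_mean_le μ i₀
    _ < (Fintype.card ι - 1 : ℕ) * 1 := ENNReal.mul_lt_mul_right (by exact_mod_cast hn)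
        (natCast_ne_top _)
        (by simpa using prob_compl_lt_one_sub_of_lt_prob (measure_pi_diagonal_pos μ ha) hD)
    _ = _ := mul_one _

end

/-- If A, B, C are iid real-valued random variables whose common law `μ` has an
atom (some `a` with `μ {a} > 0`), then `P(2A < B + C) < 2/3` strictly. -/
theorem stmt6 (μ : Measure ℝ) [IsProbabilityMeasure μ] (a : ℝ) (ha : 0 < μ {a}) :
    (Measure.pi fun _ : Fin 3 => μ) {x | 2 * x 0 < x 1 + x 2} < 2 / 3 := by
  have hset : {x : Fin 3 → ℝ | 2 * x 0 < x 1 + x 2}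
      = {x | (Fintype.card (Fin 3) : ℝ) * x 0 < ∑ j, x j} := by
    ext x
    simp only [Set.mem_ofPred_eq, Fintype.card_fin, Nat.cast_ofNat, Fin.sum_univ_three]
    constructor <;> intro h <;> linarith
  have := card_mul_measure_pi_lt_mean_lt μ ha (0 : Fin 3)
  rw [hset, ENNReal.lt_div_iff_mul_lt (by norm_num) (by norm_num), mul_comm]
  simpa using this
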